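/- Let F be a field, S = F[[X, Z, U]] the formal power series ring in three variables, R = S/(Z^2, ZU, XZ - U^3), and let m = (x, z, u) be the maximal ideal of R generated by the images x, z, u of X, Z, U. Then z·m ⊆ m^3 and z ∉ m^2; consequently z ∈ ~(m^2) \ m^2 and m^2 is not Ratliff-Rush closed (while m itself, being the maximal ideal hence prime, is Ratliff-Rush closed). -/

import Mathlib

/-!
In `R` the relations read `z x = u³`, `z z = z u = 0`, so `z m ⊆ m³`, i.e.
`z ∈ (m³ : m) ⊆ ~(m²)`.
Both non-membership facts are detected by substitutions that kill the relations:
`(x, z, u) ↦ (0, T, 0)` into `F[[T]]/(T²)` sends `m²` to `0` but `z` to `T ≠ 0`, and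
`(x, z, u) ↦ (T, 0, 0)` into `F[[T]]` sends `x^k` to `T^k ∉ (T^(k+1))`.
Finally every element outside `m` is a unit, and a unit in `(m^(k+1) : m^k)` would force
`m^k = m^(k+1)`, which `x^k` rules out; hence `~m = m`.
-/

/-- The Ratliff-Rush closure of the power `I^n`:  `⋃_{k≥0} (I^{n+k} : I^k)`. -/
noncomputable def rrPow {R : Type*} [CommRing R] (I : Ideal R) (n : ℕ) : Ideal R :=
  ⨆ k : ℕ, (I ^ (n + k)).colon ((I ^ k : Ideal R) : Set R)

open MvPowerSeries

section RatliffRush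

variable {R : Type*} [CommRing R] {I : Ideal R}

theorem mem_rrPow_of_mul_mem {n : ℕ} (k : ℕ) {a : R}
    (h : ∀ b ∈ I ^ k, a * b ∈ I ^ (n + k)) : a ∈ rrPow I n :=
  le_iSup (fun k ↦ (I ^ (n + k)).colon ((I ^ k : Ideal R) : Set R)) k
    (Submodule.mem_colon.mpr h)

theorem pow_le_rrPow (n : ℕ) : I ^ n ≤ rrPow I n :=
  fun _ ha ↦ mem_rrPow_of_mul_mem 0 fun b _ ↦ Ideal.mul_mem_right b _ ha

theorem rrPow_one_eq_self (hunit : ∀ r ∉ I, IsUnit r) (hpow : ∀ k, ¬I ^ k ≤ I ^ (k + 1)) :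
    rrPow I 1 = I := by
  refine le_antisymm (iSup_le fun k r hr ↦ ?_) (by simpa using pow_le_rrPow (I := I) 1)
  by_contra hrI
  obtain ⟨v, hv⟩ := (hunit r hrI).exists_left_inv
  refine hpow k fun s hs ↦ ?_
  have hrs : r * s ∈ I ^ (k + 1) := by
    rw [add_comm]
    exact Submodule.mem_colon.mp hr s hs
  simpa [← mul_assoc, hv] using Ideal.mul_mem_left _ v hrs

end RatliffRush

theorem MvPowerSeries.mem_span_range_X_of_constantCoeff_eq_zero {σ R : Type*} [Finite σ]
    [CommSemiring R] {f : MvPowerSeries σ R} (hf : constantCoeff f = 0) :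
    f ∈ Ideal.span (Set.range X) := by
  classical
  have := Fintype.ofFinite σ
  -- sort each nonzero monomial to one of the variables occurring in it
  choose c hc using fun d : σ →₀ ℕ ↦ fun hd : d ≠ 0 ↦ Finsupp.ne_iff.mp hd
  let g : σ → MvPowerSeries σ R := fun i d ↦
    if h : d = 0 then 0 else if c d h = i then coeff d f else 0
  have hg : ∀ i d, coeff d (g i) = if h : d = 0 then 0 else
      if c d h = i then coeff d f else 0 := fun _ _ ↦ rfl
  have hfg : f = ∑ i, g i := by
    ext d
    rw [map_sum]
    by_cases hd : d = 0
    · subst hd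
      simp [hg, hf]
    · simp [hg, hd]
  have hdvd : ∀ i, X i ∣ g i := fun i ↦ X_dvd_iff.mpr fun d hdi ↦ by
    rw [hg]
    split_ifs with hd hci
    · rfl
    · exact absurd (hci ▸ hc d hd) (by simpa using hdi)
    · rfl
  rw [hfg]
  exact Ideal.sum_mem _ fun i _ ↦
    Ideal.span_mono (by simp) (Ideal.mem_span_singleton.mpr (hdvd i))

theorem isUnit_of_notMem_map_span_range_X {σ F : Type*} [Finite σ] [Field F]
    {Q : Ideal (MvPowerSeries σ F)} {r : MvPowerSeries σ F ⧸ Q}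
    (hr : r ∉ (Ideal.span (Set.range X)).map (Ideal.Quotient.mk Q)) : IsUnit r := by
  obtain ⟨f, rfl⟩ := Ideal.Quotient.mk_surjective r
  have hf : constantCoeff f ≠ 0 := fun hf ↦
    hr (Ideal.mem_map_of_mem _ (mem_span_range_X_of_constantCoeff_eq_zero hf))
  exact (isUnit_iff_constantCoeff.mpr (isUnit_iff_ne_zero.mpr hf)).map _

noncomputable def MvPowerSeries.substVars {σ R : Type*} [Finite σ] [CommRing R]
    (a : σ → PowerSeries R) (ha : ∀ i, PowerSeries.constantCoeff (a i) = 0) :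
    MvPowerSeries σ R →+* PowerSeries R :=
  (substAlgHom (R := R) (S := R) (τ := Unit) (hasSubst_of_constantCoeff_zero ha)).toRingHom

@[simp]
theorem MvPowerSeries.substVars_X {σ R : Type*} [Finite σ] [CommRing R]
    (a : σ → PowerSeries R) (ha : ∀ i, PowerSeries.constantCoeff (a i) = 0) (i : σ) :
    substVars a ha (X i) = a i :=
  substAlgHom_X _ i

section Relations

variable {R : Type*} [CommRing R] {x z u : R}

theorem mul_mem_span_pow_three (hzx : z * x = u ^ 3) (hzz : z * z = 0) (hzu : z * u = 0)
    {f : R} (hf : f ∈ Ideal.span {x, z, u}) : z * f ∈ Ideal.span {x, z, u} ^ 3 := by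
  have hle : Ideal.span {x, z, u} ≤ (Ideal.span {x, z, u} ^ 3).colon {z} := by
    simp only [Ideal.span_le, Set.insert_subset_iff, Set.singleton_subset_iff, SetLike.mem_coe,
      Submodule.mem_colon_singleton, smul_eq_mul, mul_comm _ z, hzx, hzz, hzu,
      Submodule.zero_mem, and_true]
    exact Ideal.pow_mem_pow (Ideal.subset_span (by simp)) 3
  simpa [Submodule.mem_colon_singleton, mul_comm] using hle hf

theorem span_relations_le_ker {A : Type*} [CommRing A] (φ : R →+* A) (hzz : φ z ^ 2 = 0)
    (hzu : φ z * φ u = 0) (hxz : φ x * φ z = φ u ^ 3) :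
    Ideal.span {z ^ 2, z * u, x * z - u ^ 3} ≤ RingHom.ker φ := by
  rw [Ideal.span_le]
  rintro g (rfl | rfl | rfl) <;> simp [hzz, hzu, hxz]

end Relations

theorem notMem_span_pow_of_map {R A : Type*} [CommRing R] [CommRing A] (ψ : R →+* A)
    {s : Set R} {r : R} {n : ℕ} (h : ψ r ∉ Ideal.span (ψ '' s) ^ n) :
    r ∉ Ideal.span s ^ n :=
  fun hr ↦ h (by simpa [Ideal.map_span, Ideal.map_pow] using Ideal.mem_map_of_mem ψ hr)

namespace RatliffRushCounterexample

variable {F : Type*} [Field F]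

/-- The variables `X 0, X 1, X 2` play the roles of `X, Z, U`. -/
noncomputable abbrev relIdeal (F : Type*) [Field F] : Ideal (MvPowerSeries (Fin 3) F) :=
  Ideal.span {X 1 ^ 2, X 1 * X 2, X 0 * X 1 - X 2 ^ 3}

noncomputable abbrev var (i : Fin 3) : MvPowerSeries (Fin 3) F ⧸ relIdeal F :=
  Ideal.Quotient.mk _ (X i)

noncomputable abbrev maxIdeal (F : Type*) [Field F] :
    Ideal (MvPowerSeries (Fin 3) F ⧸ relIdeal F) :=
  Ideal.span {var 0, var 1, var 2}

theorem maxIdeal_eq_map :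
    maxIdeal F = (Ideal.span (Set.range X)).map (Ideal.Quotient.mk _) := by
  rw [maxIdeal, Ideal.map_span, ← Set.range_comp]
  congr 1
  ext
  simp [var, Fin.exists_fin_succ, eq_comm]

theorem var_one_mul_mem_maxIdeal_pow_three {f : MvPowerSeries (Fin 3) F ⧸ relIdeal F}
    (hf : f ∈ maxIdeal F) : var 1 * f ∈ maxIdeal F ^ 3 := by
  have hrel : ∀ g ∈ ({X 1 ^ 2, X 1 * X 2, X 0 * X 1 - X 2 ^ 3} :
      Set (MvPowerSeries (Fin 3) F)), Ideal.Quotient.mk (relIdeal F) g = 0 :=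
    fun g hg ↦ Ideal.Quotient.eq_zero_iff_mem.mpr (Ideal.subset_span hg)
  refine mul_mem_span_pow_three ?_ ?_ ?_ hf
  · have h := hrel (X 0 * X 1 - X 2 ^ 3) (by simp)
    rw [map_sub, map_mul, map_pow, sub_eq_zero] at h
    exact (mul_comm _ _).trans h
  · have h := hrel (X 1 ^ 2) (by simp)
    rwa [map_pow, sq] at h
  · have h := hrel (X 1 * X 2) (by simp)
    rwa [map_mul] at h

theorem constantCoeff_X_zero_zero :
    ∀ i, PowerSeries.constantCoeff (![PowerSeries.X, 0, 0] i : PowerSeries F) = 0 := by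
  simp [Fin.forall_fin_succ]

theorem constantCoeff_zero_X_zero :
    ∀ i, PowerSeries.constantCoeff (![0, PowerSeries.X, 0] i : PowerSeries F) = 0 := by
  simp [Fin.forall_fin_succ]

noncomputable def evalX : MvPowerSeries (Fin 3) F ⧸ relIdeal F →+* PowerSeries F :=
  Ideal.Quotient.lift _ (substVars _ constantCoeff_X_zero_zero)
    fun _ ha ↦ span_relations_le_ker _ (by simp) (by simp) (by simp) ha

noncomputable def evalZ :
    MvPowerSeries (Fin 3) F ⧸ relIdeal F →+*
      PowerSeries F ⧸ Ideal.span {(PowerSeries.X : PowerSeries F) ^ 2} :=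
  Ideal.Quotient.lift _ ((Ideal.Quotient.mk _).comp (substVars _ constantCoeff_zero_X_zero))
    fun _ ha ↦ span_relations_le_ker _
      (by rw [← map_pow, RingHom.comp_apply, Ideal.Quotient.eq_zero_iff_mem]; simp)
      (by simp) (by simp) ha

@[simp]
theorem evalX_var (i : Fin 3) : evalX (var i) = ![(PowerSeries.X : PowerSeries F), 0, 0] i :=
  (Ideal.Quotient.lift_mk _ _ _).trans (substVars_X _ _ i)

@[simp]
theorem evalZ_var (i : Fin 3) :
    evalZ (var i) = Ideal.Quotient.mk _ (![0, (PowerSeries.X : PowerSeries F), 0] i) :=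
  (Ideal.Quotient.lift_mk _ _ _).trans (congrArg _ (substVars_X _ _ i))

theorem var_zero_pow_notMem_pow_succ (k : ℕ) : var 0 ^ k ∉ maxIdeal F ^ (k + 1) := by
  refine notMem_span_pow_of_map evalX ?_
  simp [Set.image_insert_eq, Ideal.span_singleton_pow, Ideal.mem_span_singleton,
    pow_dvd_pow_iff PowerSeries.X_ne_zero PowerSeries.X_prime.not_isUnit]

theorem var_one_notMem_sq : var 1 ∉ maxIdeal F ^ 2 := by
  refine notMem_span_pow_of_map evalZ ?_
  have hsq : Ideal.Quotient.mk (Ideal.span {(PowerSeries.X : PowerSeries F) ^ 2})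
      PowerSeries.X ^ 2 = 0 := by
    rw [← map_pow, Ideal.Quotient.eq_zero_iff_mem]
    exact Ideal.mem_span_singleton_self _
  have hX : ¬(PowerSeries.X : PowerSeries F) ^ 2 ∣ PowerSeries.X ^ 1 := by
    rw [pow_dvd_pow_iff PowerSeries.X_ne_zero PowerSeries.X_prime.not_isUnit]
    norm_num
  simp only [Fin.isValue, Set.image_insert_eq, evalZ_var, Nat.succ_eq_add_one, Nat.reduceAdd,
    Matrix.cons_val_zero, map_zero, Matrix.cons_val_one, Set.image_singleton, Matrix.cons_val,
    Set.mem_insert_iff, Set.mem_singleton_iff, or_true, Set.insert_eq_of_mem,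
    Ideal.span_pair_zero, Ideal.span_singleton_pow, Ideal.mem_span_singleton]
  rw [hsq, zero_dvd_iff, Ideal.Quotient.eq_zero_iff_mem, Ideal.mem_span_singleton]
  simpa using hX

theorem rrPow_maxIdeal_one : rrPow (maxIdeal F) 1 = maxIdeal F := by
  refine rrPow_one_eq_self (fun _ hr ↦ isUnit_of_notMem_map_span_range_X ?_) fun k hk ↦ ?_
  · rwa [maxIdeal_eq_map] at hr
  · exact var_zero_pow_notMem_pow_succ k (hk (Ideal.pow_mem_pow (Ideal.subset_span (by simp)) k))

end RatliffRushCounterexample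

open RatliffRushCounterexample

/-- Let `R = F[[X,Z,U]]/(Z^2, ZU, XZ - U^3)` with maximal ideal `m = (x,z,u)`.
Then `z·m ⊆ m^3` and `z ∉ m^2`; consequently `z ∈ ~(m^2) \ m^2`, so `m^2` is not
Ratliff-Rush closed, while `m` itself is Ratliff-Rush closed. -/
theorem stmt_9 (F : Type*) [Field F]
    (X Z U : MvPowerSeries (Fin 3) F)
    (hX : X = MvPowerSeries.X 0) (hZ : Z = MvPowerSeries.X 1) (hU : U = MvPowerSeries.X 2)
    (Q : Ideal (MvPowerSeries (Fin 3) F))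
    (hQ : Q = Ideal.span {Z ^ 2, Z * U, X * Z - U ^ 3})
    (x z u : MvPowerSeries (Fin 3) F ⧸ Q)
    (hx : x = Ideal.Quotient.mk Q X) (hz : z = Ideal.Quotient.mk Q Z)
    (hu : u = Ideal.Quotient.mk Q U)
    (m : Ideal (MvPowerSeries (Fin 3) F ⧸ Q))
    (hm : m = Ideal.span {x, z, u}) :
    (∀ f ∈ m, z * f ∈ m ^ 3) ∧
    z ∉ m ^ 2 ∧
    z ∈ rrPow m 2 ∧
    rrPow m 2 ≠ m ^ 2 ∧
    rrPow m 1 = m := by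
  subst hX hZ hU hQ hx hz hu hm
  have hz_mem : var 1 ∈ rrPow (maxIdeal F) 2 :=
    mem_rrPow_of_mul_mem 1 fun _ hb ↦ var_one_mul_mem_maxIdeal_pow_three (by simpa using hb)
  exact ⟨fun _ ↦ var_one_mul_mem_maxIdeal_pow_three, var_one_notMem_sq, hz_mem,
    fun h ↦ var_one_notMem_sq (h ▸ hz_mem), rrPow_maxIdeal_one⟩
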